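/- Let V = ℂ³ with basis {h | v₁, v₂} (h even; v₁, v₂ odd), bracket determined by [v₁,v₂] = [v₂,v₁] = h (symmetric since both odd), [v₁,v₁] = [v₂,v₂] = 0, [h,·] = 0, and α = diag(μ₁₁μ₂₂, μ₁₁, μ₂₂) with μ₁₁μ₂₂ ≠ 0, μ₁₁ ≠ 1, μ₂₂ ≠ 1, μ₁₁μ₂₂ ≠ 1, μ₁₁² ≠ 1, μ₂₂² ≠ 1. Then every even bilinear skew-supersymmetric map φ : V × V → V commuting with α and satisfying the 2-cocycle condition δ²φ = 0 is a 2-coboundary, i.e., φ = δ¹ψ for some even linear ψ : V → V commuting with α. -/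

import Mathlib

namespace Stmt6

/-- V = ℂ³ with basis h = e₀ (even), v₁ = e₁, v₂ = e₂ (odd). -/
abbrev V : Type := Fin 3 → ℂ

/-- homogeneous of parity p: even elements lie in ℂe₀, odd ones in span{e₁,e₂}. -/
def hom (p : Bool) (x : V) : Prop := if p then x 0 = 0 else (x 1 = 0 ∧ x 2 = 0)

/-- sign (-1)^m, m ∈ {0,1} encoded as Bool. -/
def sg (b : Bool) : ℂ := if b then -1 else 1

/-- super bracket: [v₁,v₂] = [v₂,v₁] = h, others zero. -/
def br (x y : V) : V := ![x 1 * y 2 + x 2 * y 1, 0, 0]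

/-- α = diag(μ₁₁μ₂₂, μ₁₁, μ₂₂). -/
def al (μ11 μ22 : ℂ) (x : V) : V := ![μ11 * μ22 * x 0, μ11 * x 1, μ22 * x 2]

def IsLin (f : V → V) : Prop := ∀ (c : ℂ) (x y : V), f (c • x + y) = c • f x + f y

def IsBilin (f : V → V → V) : Prop :=
  (∀ y, IsLin (fun x => f x y)) ∧ (∀ x, IsLin (f x))

/- ### Auxiliary lemmas -/

lemma lin_zero {f : V → V} (h : IsLin f) : f 0 = 0 := by
  have h0 : f 0 = f 0 + f 0 := by simpa using h 1 0 0
  have := left_eq_add.mp h0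
  simpa using this

lemma lin_smul {f : V → V} (h : IsLin f) (c : ℂ) (x : V) : f (c • x) = c • f x := by
  have := h c x 0
  simpa [lin_zero h] using this

lemma lin_comb {f : V → V} (h : IsLin f) (a b : ℂ) (u w : V) :
    f (a • u + b • w) = a • f u + b • f w := by
  rw [h a u (b • w), lin_smul h]

lemma odd_decomp (x : V) (hx : hom true x) :
    x = x 1 • ![(0:ℂ),1,0] + x 2 • ![(0:ℂ),0,1] := by
  simp only [hom, if_true] at hx
  funext i
  fin_cases i <;> simp [hx]

lemma even_decomp (x : V) (hx : hom false x) :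
    x = x 0 • ![(1:ℂ),0,0] := by
  simp only [hom, if_false] at hx
  funext i
  fin_cases i <;> simp [hx.1, hx.2]

lemma cancel1 {a x : ℂ} (ha : a ≠ 0) (h : a * x = 0) : x = 0 :=
  (mul_eq_zero.mp h).resolve_left ha

/-- Every even bilinear skew-supersymmetric 2-cochain commuting with α which is a
2-cocycle is a 2-coboundary (generic parameters). -/
theorem stmt6 (μ11 μ22 : ℂ) (h1 : μ11 * μ22 ≠ 0) (h2 : μ11 ≠ 1) (h3 : μ22 ≠ 1)
    (h4 : μ11 * μ22 ≠ 1) (h5 : μ11 ^ 2 ≠ 1) (h6 : μ22 ^ 2 ≠ 1)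
    (φ : V → V → V) (hbil : IsBilin φ)
    (heven : ∀ (px py : Bool) (x y : V), hom px x → hom py y → hom (xor px py) (φ x y))
    (hskew : ∀ (px py : Bool) (x y : V), hom px x → hom py y →
        φ y x = -(sg (px && py) • φ x y))
    (hcomm : ∀ x y : V, al μ11 μ22 (φ x y) = φ (al μ11 μ22 x) (al μ11 μ22 y))
    -- 2-cocycle condition δ²φ = 0 on homogeneous elements
    (hcoc : ∀ (px py pz : Bool) (x y z : V), hom px x → hom py y → hom pz z →
        -(φ (br x y) (al μ11 μ22 z)) + sg (pz && py) • φ (br x z) (al μ11 μ22 y)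
          + φ (al μ11 μ22 x) (br y z)
          + br (al μ11 μ22 x) (φ y z)
          - sg (py && px) • br (al μ11 μ22 y) (φ x z)
          + sg (pz && xor px py) • br (al μ11 μ22 z) (φ x y) = 0) :
    ∃ ψ : V → V, IsLin ψ ∧ (∀ (p : Bool) (x : V), hom p x → hom p (ψ x)) ∧
      (∀ x : V, al μ11 μ22 (ψ x) = ψ (al μ11 μ22 x)) ∧
      ∀ (px py : Bool) (x y : V), hom px x → hom py y →
        φ x y = -(ψ (br x y)) + br x (ψ y) - sg (py && px) • br y (ψ x) := by
  have hμ11 : μ11 ≠ 0 := left_ne_zero_of_mul h1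
  have hμ22 : μ22 ≠ 0 := right_ne_zero_of_mul h1
  set B0 : V := ![(1:ℂ),0,0] with hB0
  set B1 : V := ![(0:ℂ),1,0] with hB1
  set B2 : V := ![(0:ℂ),0,1] with hB2
  have homB0 : hom false B0 := by simp [hom, hB0]
  have homB1 : hom true B1 := by simp [hom, hB1]
  have homB2 : hom true B2 := by simp [hom, hB2]
  have smul_l : ∀ (c : ℂ) (x y : V), φ (c • x) y = c • φ x y :=
    fun c x y => lin_smul (hbil.1 y) c x
  have smul_r : ∀ (c : ℂ) (x y : V), φ x (c • y) = c • φ x y :=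
    fun c x y => lin_smul (hbil.2 x) c y
  have alB0 : al μ11 μ22 B0 = (μ11 * μ22) • B0 := by
    funext i; fin_cases i <;> simp [al, hB0]
  have alB1 : al μ11 μ22 B1 = μ11 • B1 := by
    funext i; fin_cases i <;> simp [al, hB1]
  have alB2 : al μ11 μ22 B2 = μ22 • B2 := by
    funext i; fin_cases i <;> simp [al, hB2]
  -- φ on basis pairs involving B0 vanishes
  have v00 : φ B0 B0 = 0 := by
    have key := hcomm B0 B0
    rw [alB0, smul_l, smul_r] at key
    have e := heven false false B0 B0 homB0 homB0
    simp only [hom, Bool.xor_false, if_false] at e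
    have k0 := congrFun key 0
    simp only [al, smul_eq_mul, Pi.smul_apply, Matrix.cons_val_zero] at k0
    have ha : φ B0 B0 0 = 0 := by
      have h' : (μ11 * μ22) * ((1 - μ11 * μ22) * (φ B0 B0 0)) = 0 := by
        linear_combination k0
      exact cancel1 (sub_ne_zero.mpr (Ne.symm h4)) (cancel1 h1 h')
    funext i; fin_cases i
    · exact ha
    · exact e.1
    · exact e.2
  have v01 : φ B0 B1 = 0 := by
    have key := hcomm B0 B1
    rw [alB0, alB1, smul_l, smul_r] at key
    have e := heven false true B0 B1 homB0 homB1
    simp only [hom, Bool.xor_true, if_true] at e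
    have k1 := congrFun key 1
    have k2 := congrFun key 2
    simp only [al, smul_eq_mul, Pi.smul_apply, Matrix.cons_val_one, Matrix.head_cons,
      Matrix.cons_val_two, Matrix.tail_cons, Matrix.cons_val_zero] at k1 k2
    funext i; fin_cases i
    · exact e
    · exact cancel1 (sub_ne_zero.mpr (Ne.symm h4)) (cancel1 hμ11
        (show μ11 * ((1 - μ11 * μ22) * (φ B0 B1 1)) = 0 by linear_combination k1))
    · exact cancel1 (sub_ne_zero.mpr (Ne.symm h5)) (cancel1 hμ22
        (show μ22 * ((1 - μ11 ^ 2) * (φ B0 B1 2)) = 0 by linear_combination k2))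
  have v02 : φ B0 B2 = 0 := by
    have key := hcomm B0 B2
    rw [alB0, alB2, smul_l, smul_r] at key
    have e := heven false true B0 B2 homB0 homB2
    simp only [hom, Bool.xor_true, if_true] at e
    have k1 := congrFun key 1
    have k2 := congrFun key 2
    simp only [al, smul_eq_mul, Pi.smul_apply, Matrix.cons_val_one, Matrix.head_cons,
      Matrix.cons_val_two, Matrix.tail_cons, Matrix.cons_val_zero] at k1 k2
    funext i; fin_cases i
    · exact e
    · exact cancel1 (sub_ne_zero.mpr (Ne.symm h6)) (cancel1 hμ11
        (show μ11 * ((1 - μ22 ^ 2) * (φ B0 B2 1)) = 0 by linear_combination k1))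
    · exact cancel1 (sub_ne_zero.mpr (Ne.symm h4)) (cancel1 hμ22
        (show μ22 * ((1 - μ11 * μ22) * (φ B0 B2 2)) = 0 by linear_combination k2))
  have v10 : φ B1 B0 = 0 := by
    rw [hskew false true B0 B1 homB0 homB1, v01]; simp [sg]
  have v20 : φ B2 B0 = 0 := by
    rw [hskew false true B0 B2 homB0 homB2, v02]; simp [sg]
  -- φ on odd pairs
  set p : ℂ := φ B1 B1 0 with hp
  set q : ℂ := φ B1 B2 0 with hq
  set r : ℂ := φ B2 B2 0 with hr
  have v11 : φ B1 B1 = p • B0 := by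
    have e := heven true true B1 B1 homB1 homB1
    simp only [hom, Bool.xor_self, if_false] at e
    funext i; fin_cases i <;> simp [hB0, e.1, e.2, hp]
  have v12 : φ B1 B2 = q • B0 := by
    have e := heven true true B1 B2 homB1 homB2
    simp only [hom, Bool.xor_self, if_false] at e
    funext i; fin_cases i <;> simp [hB0, e.1, e.2, hq]
  have v22 : φ B2 B2 = r • B0 := by
    have e := heven true true B2 B2 homB2 homB2
    simp only [hom, Bool.xor_self, if_false] at e
    funext i; fin_cases i <;> simp [hB0, e.1, e.2, hr]
  have v21 : φ B2 B1 = q • B0 := by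
    rw [hskew true true B1 B2 homB1 homB2, v12]; simp [sg]
  -- constraints p (μ22 - μ11) = 0 and r (μ11 - μ22) = 0
  have hpc : p * (μ22 - μ11) = 0 := by
    have key := hcomm B1 B1
    rw [alB1, smul_l, smul_r] at key
    have k0 := congrFun key 0
    simp only [al, smul_eq_mul, Pi.smul_apply, Matrix.cons_val_zero] at k0
    exact cancel1 hμ11 (show μ11 * (p * (μ22 - μ11)) = 0 by
      simp only [hp]; linear_combination k0)
  have hrc : r * (μ11 - μ22) = 0 := by
    have key := hcomm B2 B2
    rw [alB2, smul_l, smul_r] at key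
    have k0 := congrFun key 0
    simp only [al, smul_eq_mul, Pi.smul_apply, Matrix.cons_val_zero] at k0
    exact cancel1 hμ22 (show μ22 * (r * (μ11 - μ22)) = 0 by
      simp only [hr]; linear_combination k0)
  -- the primitive ψ
  refine ⟨fun x => ![0, q * x 1 + (r/2) * x 2, (p/2) * x 1], ?_, ?_, ?_, ?_⟩
  · -- linear
    intro c x y
    funext i; fin_cases i <;> simp <;> ring
  · -- parity preserving
    intro pb x hx
    cases pb with
    | false =>
      simp only [hom, if_false] at hx ⊢
      simp [hx.1, hx.2]
    | true =>
      simp [hom]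
  · -- commutes with α
    intro x
    funext i; fin_cases i
    · simp [al]
    · show μ11 * (q * x 1 + r / 2 * x 2) = q * (μ11 * x 1) + r / 2 * (μ22 * x 2)
      linear_combination (x 2 / 2) * hrc
    · show μ22 * (p / 2 * x 1) = p / 2 * (μ11 * x 1)
      linear_combination (x 1 / 2) * hpc
  · -- coboundary identity
    intro px py x y hx hy
    cases px with
    | false =>
      obtain ⟨hx1, hx2⟩ : x 1 = 0 ∧ x 2 = 0 := hx
      have hL : φ x y = 0 := by
        cases py with
        | false =>
          rw [even_decomp x ⟨hx1, hx2⟩, even_decomp y hy, smul_l, smul_r, ← hB0, v00]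
          simp
        | true =>
          rw [even_decomp x ⟨hx1, hx2⟩, odd_decomp y hy, smul_l, lin_comb (hbil.2 _),
            ← hB0, ← hB1, ← hB2, v01, v02]
          simp
      rw [hL]
      funext i; fin_cases i <;>
        simp [br, hx1, hx2] <;> ring
    | true =>
      have hx0 : x 0 = 0 := hx
      cases py with
      | false =>
        obtain ⟨hy1, hy2⟩ : y 1 = 0 ∧ y 2 = 0 := hy
        have hL : φ x y = 0 := by
          rw [odd_decomp x hx, even_decomp y ⟨hy1, hy2⟩, smul_r, lin_comb (hbil.1 _),
            ← hB0, ← hB1, ← hB2, v10, v20]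
          simp
        rw [hL]
        funext i; fin_cases i <;>
          simp [br, hy1, hy2] <;> ring
      | true =>
        have hy0 : y 0 = 0 := hy
        have hL : φ x y = x 1 • (y 1 • φ B1 B1 + y 2 • φ B1 B2)
            + x 2 • (y 1 • φ B2 B1 + y 2 • φ B2 B2) := by
          conv_lhs => rw [odd_decomp x hx, odd_decomp y hy]
          rw [← hB1, ← hB2, lin_comb (hbil.1 _), lin_comb (hbil.2 _), lin_comb (hbil.2 _)]
        rw [hL, v11, v12, v21, v22]
        funext i; fin_cases i <;>
          simp [br, hB0, sg] <;> ring

end Stmt6
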